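/- Fix b > 0 and s ∈ ℝ. Let c : [0,b] → ℝ be continuous with c(z) > 0 for all z ∈ [0,b], and let F : [s,∞) × [0,b] → ℝ be bounded and Borel measurable. Then for every Borel measurable control l : [s,∞) → [0,b], ∫_s^∞ exp(−∫_s^m c(l(u)) du) · F(m, l(m)) dm ≤ sup_{m ≥ s, z ∈ [0,b]} F(m,z)/c(z). Consequently sup_l J_s(l) ≤ sup_{m ≥ s, z ∈ [0,b]} F(m,z)/c(z), where J_s(l) denotes the left-hand side. -/

import Mathlib

/-!
Write `C(m) = ∫_s^m c(l u) du`. Since `l` is only measurable, `C` is merely absolutely continuous,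
but Lebesgue differentiation still gives `(e^{-C})' = -c(l) e^{-C}` almost everywhere, so the
fundamental theorem of calculus for absolutely continuous functions yields
`∫_s^x c(l m) e^{-C(m)} dm = 1 - e^{-C(x)}`. As `c ≥ ε > 0` on `[0, b]`, `C` grows at least
linearly and `c(l m) e^{-C(m)}` is a probability density on `(s, ∞)`. The reward integrand is
`(F / c)(m, l m)` times this density, so its integral is at most `sup F / c`.
-/

open MeasureTheory Set Real Filter Topology
open scoped Interval

theorem LipschitzOnWith.comp_absolutelyContinuousOnInterval {X Y : Type*} [PseudoMetricSpace X]
    [PseudoMetricSpace Y] {φ : X → Y} {f : ℝ → X} {K : NNReal} {t : Set X} {a b : ℝ}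
    (hφ : LipschitzOnWith K φ t) (hf : AbsolutelyContinuousOnInterval f a b)
    (hft : MapsTo f (uIcc a b) t) : AbsolutelyContinuousOnInterval (φ ∘ f) a b := by
  rw [absolutelyContinuousOnInterval_iff] at hf ⊢
  intro ε hε
  obtain ⟨δ, hδ, hfδ⟩ := hf (ε / (K + 1)) (by positivity)
  refine ⟨δ, hδ, fun E hE hEδ => ?_⟩
  calc ∑ i ∈ Finset.range E.1, dist (φ (f (E.2 i).1)) (φ (f (E.2 i).2))
      ≤ ∑ i ∈ Finset.range E.1, K * dist (f (E.2 i).1) (f (E.2 i).2) := by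
        gcongr with i hi
        exact hφ.dist_le_mul _ (hft (hE.1 i hi).1) _ (hft (hE.1 i hi).2)
    _ = K * ∑ i ∈ Finset.range E.1, dist (f (E.2 i).1) (f (E.2 i).2) := by rw [Finset.mul_sum]
    _ ≤ K * (ε / (K + 1)) := by gcongr; exact (hfδ E hE hEδ).le
    _ < ε := by
      rw [mul_div_assoc', div_lt_iff₀ (by positivity)]
      nlinarith

theorem ContDiff.comp_absolutelyContinuousOnInterval {φ f : ℝ → ℝ} {a b : ℝ}
    (hφ : ContDiff ℝ 1 φ) (hf : AbsolutelyContinuousOnInterval f a b) :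
    AbsolutelyContinuousOnInterval (φ ∘ f) a b := by
  obtain ⟨K, hK⟩ := LocallyLipschitzOn.exists_lipschitzOnWith_of_compact
    (isCompact_uIcc.image_of_continuousOn hf.continuousOn) hφ.locallyLipschitz.locallyLipschitzOn
  exact hK.comp_absolutelyContinuousOnInterval hf (mapsTo_image f _)

theorem integral_mul_exp_neg_primitive {g : ℝ → ℝ} {s x : ℝ}
    (hg : IntervalIntegrable g volume s x) :
    ∫ m in s..x, g m * exp (-∫ u in s..m, g u) = 1 - exp (-∫ u in s..x, g u) := by
  set C := fun m => ∫ u in s..m, g u with hC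
  have hE : AbsolutelyContinuousOnInterval (fun m => exp (-C m)) s x :=
    contDiff_exp.comp_absolutelyContinuousOnInterval
      (hg.absolutelyContinuousOnInterval_intervalIntegral left_mem_uIcc).neg
  have hderiv : ∀ᵐ m, m ∈ Ι s x → deriv (fun m => exp (-C m)) m = -(g m * exp (-C m)) := by
    filter_upwards [hg.ae_hasDerivAt_integral] with m hm hmI
    rw [((hm (uIoc_subset_uIcc hmI) s left_mem_uIcc).fun_neg.exp).deriv]
    ring
  have hFTC := hE.integral_deriv_eq_sub
  rw [intervalIntegral.integral_congr_ae hderiv, intervalIntegral.integral_neg] at hFTC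
  simp only [hC, intervalIntegral.integral_same, neg_zero, exp_zero] at hFTC
  linarith

theorem tendsto_integral_mul_exp_neg_primitive {g : ℝ → ℝ} {s : ℝ}
    (hg : ∀ x, IntervalIntegrable g volume s x)
    (hC : Tendsto (fun x => ∫ u in s..x, g u) atTop atTop) :
    Tendsto (fun x => ∫ m in s..x, g m * exp (-∫ u in s..m, g u)) atTop (𝓝 1) := by
  simp_rw [integral_mul_exp_neg_primitive (hg _)]
  simpa using (tendsto_exp_neg_atTop_nhds_zero.comp hC).const_sub 1

theorem integrableOn_Ioi_mul_exp_neg_primitive {g : ℝ → ℝ} {s : ℝ}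
    (hg : ∀ x, IntervalIntegrable g volume s x) (hg0 : ∀ m, s ≤ m → 0 ≤ g m)
    (hC : Tendsto (fun x => ∫ u in s..x, g u) atTop atTop) :
    IntegrableOn (fun m => g m * exp (-∫ u in s..m, g u)) (Ioi s) := by
  refine integrableOn_Ioi_of_intervalIntegral_norm_tendsto 1 s
    (fun x => ((hg x).mul_continuousOn ?_).def'.mono_set Ioc_subset_uIoc) tendsto_id
    ((tendsto_integral_mul_exp_neg_primitive hg hC).congr' ?_)
  · exact ((hg x).absolutelyContinuousOnInterval_intervalIntegral left_mem_uIcc).continuousOn.neg.rexp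
  · filter_upwards [eventually_ge_atTop s] with x hx
    refine intervalIntegral.integral_congr fun m hm => ?_
    rw [uIcc_of_le hx] at hm
    exact (Real.norm_of_nonneg (mul_nonneg (hg0 m hm.1) (exp_nonneg _))).symm

theorem integral_Ioi_mul_exp_neg_primitive {g : ℝ → ℝ} {s : ℝ}
    (hg : ∀ x, IntervalIntegrable g volume s x) (hg0 : ∀ m, s ≤ m → 0 ≤ g m)
    (hC : Tendsto (fun x => ∫ u in s..x, g u) atTop atTop) :
    ∫ m in Ioi s, g m * exp (-∫ u in s..m, g u) = 1 :=
  tendsto_nhds_unique (intervalIntegral_tendsto_integral_Ioi s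
    (integrableOn_Ioi_mul_exp_neg_primitive hg hg0 hC) tendsto_id)
    (tendsto_integral_mul_exp_neg_primitive hg hC)

theorem tendsto_primitive_atTop {g : ℝ → ℝ} {s ε : ℝ} (hg : ∀ x, IntervalIntegrable g volume s x)
    (hε : 0 < ε) (hgε : ∀ m, s ≤ m → ε ≤ g m) :
    Tendsto (fun x => ∫ u in s..x, g u) atTop atTop := by
  have hlin : Tendsto (fun x => ε * (x - s)) atTop atTop :=
    (tendsto_atTop_add_const_right _ (-s) tendsto_id).const_mul_atTop hε
  refine tendsto_atTop_mono' _ ?_ hlin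
  filter_upwards [eventually_ge_atTop s] with x hx
  have := intervalIntegral.integral_mono_on hx intervalIntegrable_const (hg x)
    fun u hu => hgε u hu.1
  simpa [mul_comm] using this

theorem setIntegral_exp_neg_primitive_mul_le {g f : ℝ → ℝ} {s ε M K : ℝ}
    (hg : LocallyIntegrable g volume) (hε : 0 < ε) (hgε : ∀ m, s ≤ m → ε ≤ g m)
    (hf : AEStronglyMeasurable f (volume.restrict (Ioi s))) (hfM : ∀ m, s ≤ m → |f m| ≤ M)
    (hfK : ∀ m, s ≤ m → f m ≤ K * g m) :
    ∫ m in Ioi s, exp (-∫ u in s..m, g u) * f m ≤ K := by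
  have hgi : ∀ a b, IntervalIntegrable g volume a b := fun a b =>
    (hg.integrableOn_isCompact isCompact_uIcc).intervalIntegrable
  have hg0 : ∀ m, s ≤ m → 0 ≤ g m := fun m hm => hε.le.trans (hgε m hm)
  have hC := tendsto_primitive_atTop (hgi s) hε hgε
  have hdensity := integrableOn_Ioi_mul_exp_neg_primitive (hgi s) hg0 hC
  have hM : 0 ≤ M := (abs_nonneg _).trans (hfM s le_rfl)
  have hfint : IntegrableOn (fun m => exp (-∫ u in s..m, g u) * f m) (Ioi s) := by
    refine (hdensity.const_mul (M / ε)).mono' ?_ ?_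
    · exact (intervalIntegral.continuous_primitive hgi s).neg.rexp.aestronglyMeasurable.mul hf
    · filter_upwards [ae_restrict_mem measurableSet_Ioi] with m hm
      -- `1 ≤ g m / ε` turns the bound `M` on `f` into a multiple of the density
      have hgm : M ≤ M / ε * g m := by
        rw [div_mul_eq_mul_div, le_div_iff₀ hε]
        exact mul_le_mul_of_nonneg_left (hgε m hm.le) hM
      rw [norm_mul, Real.norm_of_nonneg (exp_nonneg _), Real.norm_eq_abs]
      calc exp (-∫ u in s..m, g u) * |f m| ≤ exp (-∫ u in s..m, g u) * (M / ε * g m) := by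
            gcongr; exact (hfM m hm.le).trans hgm
        _ = M / ε * (g m * exp (-∫ u in s..m, g u)) := by ring
  calc ∫ m in Ioi s, exp (-∫ u in s..m, g u) * f m
      ≤ ∫ m in Ioi s, K * (g m * exp (-∫ u in s..m, g u)) := by
        refine setIntegral_mono_on hfint (hdensity.const_mul K) measurableSet_Ioi fun m hm => ?_
        calc exp (-∫ u in s..m, g u) * f m ≤ exp (-∫ u in s..m, g u) * (K * g m) := by
              gcongr; exact hfK m hm.le
          _ = K * (g m * exp (-∫ u in s..m, g u)) := by ring
    _ = K := by rw [integral_const_mul, integral_Ioi_mul_exp_neg_primitive (hgi s) hg0 hC, mul_one]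

theorem ContinuousOn.measurable_comp {α : Type*} [MeasurableSpace α] {c : ℝ → ℝ} {l : α → ℝ}
    {t : Set ℝ} (hc : ContinuousOn c t) (hl : Measurable l) (hlt : ∀ u, l u ∈ t) :
    Measurable fun u => c (l u) :=
  (continuousOn_iff_continuous_domRestrict.mp hc).measurable.comp (hl.subtype_mk (h := hlt))

/-- Verification-type bound for the reduced deterministic control problem:
the discounted total reward of any control never exceeds the best instantaneous
ratio `F(m,z)/c(z)`. -/
theorem stmt_3 (b : ℝ) (hb : 0 < b) (s : ℝ)
    (c : ℝ → ℝ) (hc : ContinuousOn c (Set.Icc 0 b))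
    (hcpos : ∀ z ∈ Set.Icc (0:ℝ) b, 0 < c z)
    (F : ℝ → ℝ → ℝ) (M : ℝ)
    (hFbdd : ∀ m z, s ≤ m → z ∈ Set.Icc (0:ℝ) b → |F m z| ≤ M)
    (hFmeas : Measurable (Function.uncurry F))
    (J : (ℝ → ℝ) → ℝ)
    (hJ : ∀ l : ℝ → ℝ, J l =
      ∫ m in Set.Ioi s, Real.exp (-(∫ u in s..m, c (l u))) * F m (l m)) :
    (∀ l : ℝ → ℝ, Measurable l → (∀ u, l u ∈ Set.Icc (0:ℝ) b) →
      J l ≤ sSup {r : ℝ | ∃ m, s ≤ m ∧ ∃ z ∈ Set.Icc (0:ℝ) b, r = F m z / c z}) ∧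
    (⨆ l : {l : ℝ → ℝ // Measurable l ∧ ∀ u, l u ∈ Set.Icc (0:ℝ) b}, J l.1)
      ≤ sSup {r : ℝ | ∃ m, s ≤ m ∧ ∃ z ∈ Set.Icc (0:ℝ) b, r = F m z / c z} := by
  set S := {r : ℝ | ∃ m, s ≤ m ∧ ∃ z ∈ Set.Icc (0:ℝ) b, r = F m z / c z}
  obtain ⟨z₀, hz₀, hcmin⟩ := isCompact_Icc.exists_isMinOn (nonempty_Icc.mpr hb.le) hc
  obtain ⟨B, hB⟩ := isCompact_Icc.exists_bound_of_continuousOn hc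
  have hε : 0 < c z₀ := hcpos z₀ hz₀
  have hM : 0 ≤ M := (abs_nonneg _).trans (hFbdd s 0 le_rfl (left_mem_Icc.mpr hb.le))
  have hS : BddAbove S := ⟨M / c z₀, by
    rintro r ⟨m, hm, z, hz, rfl⟩
    exact div_le_div₀ hM ((le_abs_self _).trans (hFbdd m z hm hz)) hε (hcmin hz)⟩
  have hbound : ∀ l : ℝ → ℝ, Measurable l → (∀ u, l u ∈ Icc (0:ℝ) b) → J l ≤ sSup S := by
    intro l hl hlb
    have hcl := hc.measurable_comp hl hlb
    rw [hJ l]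
    refine setIntegral_exp_neg_primitive_mul_le ((locallyIntegrable_const B).mono
      hcl.aestronglyMeasurable (ae_of_all _ fun u => ?_)) hε (fun u _ => hcmin (hlb u))
      (hFmeas.comp (measurable_id.prodMk hl)).aestronglyMeasurable
      (fun m hm => hFbdd m (l m) hm (hlb m)) (fun m hm => ?_)
    · exact (hB _ (hlb u)).trans (le_abs_self B)
    · exact (div_le_iff₀ (hcpos _ (hlb m))).mp (le_csSup hS ⟨m, hm, l m, hlb m, rfl⟩)
  refine ⟨hbound, ?_⟩
  have : Nonempty {l : ℝ → ℝ // Measurable l ∧ ∀ u, l u ∈ Icc (0:ℝ) b} :=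
    ⟨⟨fun _ => 0, measurable_const, fun _ => left_mem_Icc.mpr hb.le⟩⟩
  exact ciSup_le fun l => hbound l.1 l.2.1 l.2.2
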